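/- arXiv:2507.13307 — 2 statements merged into one kernel-verified Lean document; each statement's English description precedes it below -/
import Mathlib

section
/- Let τ_1, τ_2 > 0, η, σ², ε > 0 and P ≥ ε(τ_1 + τ_2). Consider maximizing log(1 + ηP_1/(σ²τ_1)) + log(1 + ηP_2/(σ²τ_2)) subject to P_1 ≥ ετ_1, P_2 ≥ ετ_2, P_1 + P_2 ≤ P. If 1/(P − ετ_2 + σ²τ_1/η) ≥ 1/(ετ_2 + σ²τ_2/η), then the optimal solution is P_1 = P − ετ_2, P_2 = ετ_2. -/
/-!
With `aᵢ = σ² τᵢ / η`, the objective is `log ((a₁ + P₁)(a₂ + P₂)) - log (a₁ a₂)`, so it suffices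
to maximise the product `x y` of the shifted powers `x = a₁ + P₁`, `y = a₂ + P₂`. The hypothesis on
the marginal utilities says that at the corner `(x₀, y₀)` we have `x₀ ≤ y₀`; any feasible `(x, y)` has
`x ≤ x₀` and `x + y ≤ x₀ + y₀`, and `x y - x₀ y₀ ≤ x (x₀ + y₀ - x) - x₀ y₀ = -(x₀ - x)(y₀ - x) ≤ 0`.
-/

lemma mul_le_mul_of_add_le_of_le_of_le {x y x₀ y₀ : ℝ} (hx : 0 ≤ x) (hy : y₀ ≤ y)
    (hsum : x + y ≤ x₀ + y₀) (hxy₀ : x₀ ≤ y₀) : x * y ≤ x₀ * y₀ := by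
  have hx₀ : x ≤ x₀ := by linarith
  nlinarith [mul_nonneg (sub_nonneg.mpr hx₀) (sub_nonneg.mpr (hx₀.trans hxy₀))]

lemma Real.log_one_add_div_add_log_one_add_div_le {a₁ a₂ Q₁ Q₂ R₁ R₂ : ℝ}
    (ha₁ : 0 < a₁) (ha₂ : 0 < a₂) (hQ₁ : 0 ≤ Q₁) (hQ₂ : R₂ ≤ Q₂) (hsum : Q₁ + Q₂ ≤ R₁ + R₂)
    (hR : a₁ + R₁ ≤ a₂ + R₂) :
    Real.log (1 + Q₁ / a₁) + Real.log (1 + Q₂ / a₂)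
      ≤ Real.log (1 + R₁ / a₁) + Real.log (1 + R₂ / a₂) := by
  have hx : 0 < a₁ + Q₁ := by linarith
  have hx₀ : 0 < a₁ + R₁ := by linarith
  have hy₀ : 0 < a₂ + R₂ := by linarith
  have hy : 0 < a₂ + Q₂ := by linarith
  have hprod : (a₁ + Q₁) * (a₂ + Q₂) ≤ (a₁ + R₁) * (a₂ + R₂) :=
    mul_le_mul_of_add_le_of_le_of_le hx.le (by linarith) (by linarith) hR
  have hlog : ∀ {a Q : ℝ}, 0 < a → 0 < a + Q →
      Real.log (1 + Q / a) = Real.log (a + Q) - Real.log a := fun ha haQ => by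
    rw [← Real.log_div haQ.ne' ha.ne', add_div, div_self ha.ne']
  rw [hlog ha₁ hx, hlog ha₂ hy, hlog ha₁ hx₀, hlog ha₂ hy₀]
  have := Real.log_le_log (by positivity) hprod
  rw [Real.log_mul hx.ne' hy.ne', Real.log_mul hx₀.ne' hy₀.ne'] at this
  linarith

theorem stmt_15_general (τ1 τ2 η σ2 ε P : ℝ)
    (hτ1 : 0 < τ1) (hτ2 : 0 < τ2) (hη : 0 < η) (hσ : 0 < σ2) (hε : 0 < ε)
    (hcond : 1 / (ε * τ2 + σ2 * τ2 / η) ≤ 1 / (P - ε * τ2 + σ2 * τ1 / η)) :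
    ∀ Q1 Q2 : ℝ, ε * τ1 ≤ Q1 → ε * τ2 ≤ Q2 → Q1 + Q2 ≤ P →
      Real.log (1 + η * Q1 / (σ2 * τ1)) + Real.log (1 + η * Q2 / (σ2 * τ2))
        ≤ Real.log (1 + η * (P - ε * τ2) / (σ2 * τ1))
          + Real.log (1 + η * (ε * τ2) / (σ2 * τ2)) := by
  intro Q1 Q2 hQ1 hQ2 hsum
  have hscale : ∀ τ Q : ℝ, η * Q / (σ2 * τ) = Q / (σ2 * τ / η) := fun τ Q => by
    rw [div_div_eq_mul_div, mul_comm]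
  simp only [hscale]
  have hB : 0 < ε * τ2 + σ2 * τ2 / η := by positivity
  have hA : 0 < P - ε * τ2 + σ2 * τ1 / η := one_div_pos.mp (lt_of_lt_of_le (one_div_pos.mpr hB) hcond)
  have hcorner : σ2 * τ1 / η + (P - ε * τ2) ≤ σ2 * τ2 / η + ε * τ2 := by
    linarith [(one_div_le_one_div hB hA).mp hcond]
  exact Real.log_one_add_div_add_log_one_add_div_le (by positivity) (by positivity)
    ((mul_pos hε hτ1).le.trans hQ1) hQ2 (by linarith) hcorner

theorem stmt_15 (τ1 τ2 η σ2 ε P : ℝ)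
    (hτ1 : 0 < τ1) (hτ2 : 0 < τ2) (hη : 0 < η) (hσ : 0 < σ2) (hε : 0 < ε)
    (hP : ε * (τ1 + τ2) ≤ P)
    (hcond : 1 / (ε * τ2 + σ2 * τ2 / η) ≤ 1 / (P - ε * τ2 + σ2 * τ1 / η)) :
    ∀ Q1 Q2 : ℝ, ε * τ1 ≤ Q1 → ε * τ2 ≤ Q2 → Q1 + Q2 ≤ P →
      Real.log (1 + η * Q1 / (σ2 * τ1)) + Real.log (1 + η * Q2 / (σ2 * τ2))
        ≤ Real.log (1 + η * (P - ε * τ2) / (σ2 * τ1))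
          + Real.log (1 + η * (ε * τ2) / (σ2 * τ2)) :=
  stmt_15_general τ1 τ2 η σ2 ε P hτ1 hτ2 hη hσ hε hcond
end

section
/- Let a, b, P > 0 and suppose the corner conditions fail, i.e., 1/(P − β + 1/a) < 1/(β + 1/b) and 1/(P − α + 1/b) < 1/(α + 1/a), where α, β ≥ 0 are the minimum powers with α + β ≤ P. Then the interior point P_1 = P/2 + 1/(2b) − 1/(2a), P_2 = P/2 + 1/(2a) − 1/(2b) is feasible (P_1 ≥ α, P_2 ≥ β) and is the unique maximizer of log(1+aP_1) + log(1+bP_2) subject to P_1 ≥ α, P_2 ≥ β, P_1 + P_2 = P. -/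
/-! Writing `1 + a q = a (q + 1/a)`, the objective is `log (a b) + log ((q₁ + 1/a) (q₂ + 1/b))`,
and the two factors have the fixed sum `P + 1/a + 1/b`. Their product is therefore maximal, and
only there, when they are equal, i.e. at the common water level `P₁ + 1/a = P₂ + 1/b`.
The corner conditions say exactly that this level lies strictly above both floors `α + 1/a`
and `β + 1/b`. -/

open Real

theorem one_add_mul_eq {a q : ℝ} (ha : a ≠ 0) : 1 + a * q = a * (q + 1 / a) := by
  field_simp
  ring

section WaterFilling

variable {a b p₁ p₂ q₁ q₂ : ℝ}

theorem one_add_mul_mul_one_add_mul_add_sq (ha : a ≠ 0) (hb : b ≠ 0)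
    (hlevel : p₁ + 1 / a = p₂ + 1 / b) (hsum : q₁ + q₂ = p₁ + p₂) :
    (1 + a * q₁) * (1 + b * q₂) + a * b * (q₁ - p₁) ^ 2 = (1 + a * p₁) * (1 + b * p₂) := by
  have hq₂ : q₂ = p₁ + p₂ - q₁ := by linarith
  have hp₂ : p₂ = p₁ + 1 / a - 1 / b := by linarith
  subst hq₂ hp₂
  field_simp
  ring

theorem log_add_log_lt_of_ne (ha : 0 < a) (hb : 0 < b)
    (hlevel : p₁ + 1 / a = p₂ + 1 / b) (hsum : q₁ + q₂ = p₁ + p₂)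
    (hq₁ : 0 < 1 + a * q₁) (hq₂ : 0 < 1 + b * q₂) (hne : q₁ ≠ p₁) :
    log (1 + a * q₁) + log (1 + b * q₂) < log (1 + a * p₁) + log (1 + b * p₂) := by
  have hid := one_add_mul_mul_one_add_mul_add_sq ha.ne' hb.ne' hlevel hsum
  have hgap : 0 < a * b * (q₁ - p₁) ^ 2 := by
    have := sub_ne_zero.2 hne
    positivity
  have hx : 0 < q₁ + 1 / a := by rwa [one_add_mul_eq ha.ne', mul_pos_iff_of_pos_left ha] at hq₁
  have hy : 0 < q₂ + 1 / b := by rwa [one_add_mul_eq hb.ne', mul_pos_iff_of_pos_left hb] at hq₂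
  have hp₁ : 0 < 1 + a * p₁ := by
    rw [one_add_mul_eq ha.ne']
    exact mul_pos ha (by linarith)
  have hp₂ : 0 < 1 + b * p₂ := by
    rw [one_add_mul_eq hb.ne']
    exact mul_pos hb (by linarith)
  rw [← log_mul hq₁.ne' hq₂.ne', ← log_mul hp₁.ne' hp₂.ne']
  exact log_lt_log (by positivity) (by linarith)

end WaterFilling

theorem stmt_19_general (a b P α β : ℝ)
    (ha : 0 < a) (hb : 0 < b)
    (hα : 0 ≤ α) (hβ : 0 ≤ β) (hαβ : α + β ≤ P)
    (hc1 : 1 / (P - β + 1 / a) < 1 / (β + 1 / b))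
    (hc2 : 1 / (P - α + 1 / b) < 1 / (α + 1 / a))
    (P1 P2 : ℝ)
    (hP1 : P1 = P / 2 + 1 / (2 * b) - 1 / (2 * a))
    (hP2 : P2 = P / 2 + 1 / (2 * a) - 1 / (2 * b)) :
    α ≤ P1 ∧ β ≤ P2 ∧
    ∀ Q1 Q2 : ℝ, α ≤ Q1 → β ≤ Q2 → Q1 + Q2 = P →
      Real.log (1 + a * Q1) + Real.log (1 + b * Q2)
        ≤ Real.log (1 + a * P1) + Real.log (1 + b * P2) ∧
      (Real.log (1 + a * Q1) + Real.log (1 + b * Q2)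
        = Real.log (1 + a * P1) + Real.log (1 + b * P2) → Q1 = P1 ∧ Q2 = P2) := by
  have hlevel : P1 + 1 / a = P2 + 1 / b := by rw [hP1, hP2]; ring
  have hsum : P1 + P2 = P := by rw [hP1, hP2]; ring
  have hia : 0 < 1 / a := one_div_pos.2 ha
  have hib : 0 < 1 / b := one_div_pos.2 hb
  have h2P1 : 2 * P1 = P + 1 / b - 1 / a := by rw [hP1]; ring
  have h2P2 : 2 * P2 = P + 1 / a - 1 / b := by rw [hP2]; ring
  have hαP1 : α < P1 := by
    have := lt_of_one_div_lt_one_div (by linarith) hc2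
    linarith
  have hβP2 : β < P2 := by
    have := lt_of_one_div_lt_one_div (by linarith) hc1
    linarith
  refine ⟨hαP1.le, hβP2.le, fun Q1 Q2 hQ1 hQ2 hQ => ?_⟩
  by_cases hne : Q1 = P1
  · have : Q2 = P2 := by linarith
    subst hne this
    exact ⟨le_rfl, fun _ => ⟨rfl, rfl⟩⟩
  have hlt := log_add_log_lt_of_ne ha hb hlevel (hQ.trans hsum.symm)
    (by nlinarith) (by nlinarith) hne
  exact ⟨hlt.le, fun heq => absurd heq hlt.ne⟩

theorem stmt_19 (a b P α β : ℝ)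
    (ha : 0 < a) (hb : 0 < b) (hP : 0 < P)
    (hα : 0 ≤ α) (hβ : 0 ≤ β) (hαβ : α + β ≤ P)
    (hc1 : 1 / (P - β + 1 / a) < 1 / (β + 1 / b))
    (hc2 : 1 / (P - α + 1 / b) < 1 / (α + 1 / a))
    (P1 P2 : ℝ)
    (hP1 : P1 = P / 2 + 1 / (2 * b) - 1 / (2 * a))
    (hP2 : P2 = P / 2 + 1 / (2 * a) - 1 / (2 * b)) :
    α ≤ P1 ∧ β ≤ P2 ∧
    ∀ Q1 Q2 : ℝ, α ≤ Q1 → β ≤ Q2 → Q1 + Q2 = P →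
      Real.log (1 + a * Q1) + Real.log (1 + b * Q2)
        ≤ Real.log (1 + a * P1) + Real.log (1 + b * P2) ∧
      (Real.log (1 + a * Q1) + Real.log (1 + b * Q2)
        = Real.log (1 + a * P1) + Real.log (1 + b * P2) → Q1 = P1 ∧ Q2 = P2) :=
  stmt_19_general a b P α β ha hb hα hβ hαβ hc1 hc2 P1 P2 hP1 hP2
end
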